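/- Let Φ be a 3-CNF formula with variables x₁,…,x_n and clauses C₁,…,C_m in which every literal occurs in exactly two clauses, and let k = n + 2m. Construct the graph G as follows. For every variable x_i, G contains vertices x_i and ¬x_i together with k−5 vertices c_i^1,…,c_i^{k−5}, each c_i^j adjacent to both x_i and ¬x_i. For every clause C_j with literals l_j^1, l_j^2, l_j^3, G contains three literal vertices l_j^1, l_j^2, l_j^3 and k−3 vertices b_j^1,…,b_j^{k−3}, each b_j^i adjacent to all three literal vertices of C_j. Finally, for every clause C_j and every a ∈ {1,2,3}, G contains two vertices d_j^a and e_j^a, each adjacent to the literal vertex l_j^a and additionally adjacent to the variable-gadget vertex (x_i or ¬x_i) that corresponds to the literal l_j^a. Then Φ is satisfiable if and only if G has a set B of at most k vertices such that every connected component of G − B has at most k vertices. Moreover, G is bipartite, and if such a set B exists then one exists consisting only of vertices in {x_i, ¬x_i : 1 ≤ i ≤ n} ∪ {l_j^a : 1 ≤ j ≤ m, a ∈ {1,2,3}}. -/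

import Mathlib

/-!
If `σ` satisfies the formula and clause `j` is satisfied by its literal `ch j`, delete the
vertex of the true literal in every variable gadget and the two other literal vertices of every
clause: `n + 2m = k` vertices. Every pendant then hangs on a surviving literal vertex (if it
belongs to `ch j`), on a surviving variable-gadget vertex (if its literal is false), or on
nothing, so the components are a variable gadget with the four pendants of its false literal
(`1 + (k - 5) + 4` vertices), a clause gadget with the two pendants of its satisfied literal
(`1 + (k - 3) + 2`), or a single pendant.

Conversely let `B` be a solution, and for each gadget let `r` (variable) or `w` (clause) count
its vertices in `B`, and `p` or `d` the pendants in `B` attached to it. A variable gadget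
avoided by `B` lies in one component with its `8 - p` surviving pendants, so `p ≥ 5`; a clause
gadget met in `w ≤ 2` vertices keeps `3 - w` literal vertices, whose surviving pendants join its
component. Hence `3r + 2p ≥ 3` and `3w + d ≥ 6`. Each pendant is attached to one variable and
one clause, so these bounds add up to `3n + 6m ≤ 3|B| ≤ 3k`; equality forces `r = 1`, `p = 0`
and then `w = 2`. Now the component of each clause gadget is too large unless its surviving
literal vertex has its variable-gadget vertex in `B`, so making `x_i` true iff `x_i ∈ B`
satisfies the formula.
The literal and variable-gadget vertices form one side of a bipartition.
-/

/-- Every connected component of `G` after deleting the vertex set `B` has at most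
`k` vertices. -/
def SmallComponents {V : Type*} (G : SimpleGraph V) (B : Set V) (k : ℕ) : Prop :=
  ∀ c : (G.induce Bᶜ).ConnectedComponent, c.supp.ncard ≤ k

/-- The vertices of the graph built from a 3-CNF formula with `n` variables and `m` clauses
(where `k = n + 2m`): literal vertices `x_i`/`¬x_i` of the variable gadgets (`var i s`),
the `k − 5` middle vertices `c_i^j` of the variable gadgets (`cv`), the three literal
vertices `l_j^a` of each clause gadget (`lit`), the `k − 3` middle vertices `b_j^i` of the
clause gadgets (`bv`), and the pendant pairs `d_j^a` (`dv`) and `e_j^a` (`ev`). -/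
inductive SatVert (n m : ℕ) where
  | var : Fin n → Bool → SatVert n m
  | cv : Fin n → Fin (n + 2 * m - 5) → SatVert n m
  | lit : Fin m → Fin 3 → SatVert n m
  | bv : Fin m → Fin (n + 2 * m - 3) → SatVert n m
  | dv : Fin m → Fin 3 → SatVert n m
  | ev : Fin m → Fin 3 → SatVert n m
  deriving DecidableEq

/-- The adjacency-generating relation of the reduction graph. The literal in position `a` of
clause `j` is `lit j a = (i, s)`, representing `x_i` if `s = true` and `¬x_i` if `s = false`.
Each `c_i^j` is adjacent to `x_i` and `¬x_i`; each `b_j^i` is adjacent to the three literal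
vertices of clause `j`; each of `d_j^a`, `e_j^a` is adjacent to the literal vertex `l_j^a`
and to the variable-gadget vertex corresponding to that literal. -/
def satRel (n m : ℕ) (lit : Fin m → Fin 3 → Fin n × Bool) :
    SatVert n m → SatVert n m → Prop
  | .cv i _, .var i' _ => i = i'
  | .bv j _, .lit j' _ => j = j'
  | .dv j a, .lit j' a' => j = j' ∧ a = a'
  | .ev j a, .lit j' a' => j = j' ∧ a = a'
  | .dv j a, .var i s => lit j a = (i, s)
  | .ev j a, .var i s => lit j a = (i, s)
  | _, _ => False

open SimpleGraph Finset

namespace SimpleGraph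

variable {V : Type*} {G : SimpleGraph V} {B : Set V} {u v w : V}

variable (G B) in
def componentAvoiding (u : V) : Set V :=
  {v | ∃ (hu : u ∉ B) (hv : v ∉ B), (G.induce Bᶜ).Reachable ⟨u, hu⟩ ⟨v, hv⟩}

lemma self_mem_componentAvoiding (hu : u ∉ B) : u ∈ G.componentAvoiding B u :=
  ⟨hu, hu, .refl _⟩

lemma Adj.mem_componentAvoiding (h : G.Adj v w) (hv : v ∈ G.componentAvoiding B u)
    (hw : w ∉ B) : w ∈ G.componentAvoiding B u := by
  obtain ⟨hu, hv, r⟩ := hv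
  exact ⟨hu, hw, r.trans (show (G.induce Bᶜ).Adj ⟨v, hv⟩ ⟨w, hw⟩ from h).reachable⟩

end SimpleGraph

lemma Finset.card_filter_add_card_compl_filter {α : Type*} [Fintype α] [DecidableEq α]
    (B : Finset α) (p : α → Prop) [DecidablePred p] :
    #{v ∈ B | p v} + #{v ∈ Bᶜ | p v} = #{v | p v} := by
  rw [← card_union_of_disjoint (disjoint_filter_filter disjoint_compl_right), ← filter_union,
    union_compl]

section SmallComponents

variable {V : Type*} {G : SimpleGraph V} {k : ℕ}

lemma SmallComponents.card_le [Finite V] {B : Set V} (h : SmallComponents G B k) {u : V}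
    {S : Finset V} (hS : ∀ v ∈ S, v ∈ G.componentAvoiding B u) : S.card ≤ k := by
  rcases S.eq_empty_or_nonempty with rfl | ⟨v₀, hv₀⟩
  · simp
  obtain ⟨hu, -, -⟩ := hS v₀ hv₀
  set c := (G.induce Bᶜ).connectedComponentMk ⟨u, hu⟩
  have hsub : (S : Set V) ⊆ Subtype.val '' c.supp := by
    intro v hv
    obtain ⟨_, hv', r⟩ := hS v hv
    exact ⟨⟨v, hv'⟩, ConnectedComponent.eq.mpr r.symm, rfl⟩
  calc S.card = (S : Set V).ncard := (Set.ncard_coe_finset S).symm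
    _ ≤ (Subtype.val '' c.supp).ncard := Set.ncard_le_ncard hsub (Set.toFinite _)
    _ = c.supp.ncard := Set.ncard_image_of_injective _ Subtype.val_injective
    _ ≤ k := h c

lemma SmallComponents.sum_card_filter_compl_le {ι : Type*} [Fintype V] [DecidableEq V]
    [DecidableEq ι] {B : Finset V} (h : SmallComponents G (B : Set V) k) (f : V → ι)
    (X : Finset ι) {u : V} (hX : ∀ v, v ∉ B → f v ∈ X → v ∈ G.componentAvoiding B u) :
    ∑ x ∈ X, #{v ∈ Bᶜ | f v = x} ≤ k := by
  rw [sum_card_fiberwise_eq_card_filter]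
  refine h.card_le (u := u) fun v hv => ?_
  rw [mem_filter, mem_compl] at hv
  exact hX v hv.1 hv.2

lemma smallComponents_of_invariant [Finite V] {B : Set V} {ι : Type*} (ρ : V → ι)
    (hρ : ∀ v w, v ∉ B → w ∉ B → G.Adj v w → ρ v = ρ w)
    (hk : ∀ r, {v | v ∉ B ∧ ρ v = r}.ncard ≤ k) : SmallComponents G B k := by
  have hreach : ∀ x y : ↥Bᶜ, (G.induce Bᶜ).Reachable x y → ρ x = ρ y := by
    intro x y h
    rw [reachable_iff_reflTransGen] at h
    induction h with
    | refl => rfl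
    | @tail y z _ hadj ih => exact ih.trans (hρ _ _ y.2 z.2 hadj)
  intro c
  obtain ⟨x, rfl⟩ := c.exists_rep
  calc ((G.induce Bᶜ).connectedComponentMk x).supp.ncard
      = (Subtype.val '' ((G.induce Bᶜ).connectedComponentMk x).supp).ncard :=
        (Set.ncard_image_of_injective _ Subtype.val_injective).symm
    _ ≤ {v | v ∉ B ∧ ρ v = ρ x}.ncard := by
        refine Set.ncard_le_ncard ?_ (Set.toFinite _)
        rintro _ ⟨y, hy, rfl⟩
        exact ⟨y.2, hreach y x (ConnectedComponent.eq.mp hy)⟩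
    _ ≤ k := hk _

end SmallComponents

namespace SatVert

variable {n m : ℕ}

def equivSum (n m : ℕ) : SatVert n m ≃
    (Fin n × Bool) ⊕ (Fin n × Fin (n + 2 * m - 5)) ⊕ (Fin m × Fin 3) ⊕
      (Fin m × Fin (n + 2 * m - 3)) ⊕ (Fin m × Fin 3) ⊕ (Fin m × Fin 3) where
  toFun
    | .var i s => .inl (i, s)
    | .cv i t => .inr (.inl (i, t))
    | .lit j a => .inr (.inr (.inl (j, a)))
    | .bv j t => .inr (.inr (.inr (.inl (j, t))))
    | .dv j a => .inr (.inr (.inr (.inr (.inl (j, a)))))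
    | .ev j a => .inr (.inr (.inr (.inr (.inr (j, a)))))
  invFun
    | .inl (i, s) => .var i s
    | .inr (.inl (i, t)) => .cv i t
    | .inr (.inr (.inl (j, a))) => .lit j a
    | .inr (.inr (.inr (.inl (j, t)))) => .bv j t
    | .inr (.inr (.inr (.inr (.inl (j, a))))) => .dv j a
    | .inr (.inr (.inr (.inr (.inr (j, a))))) => .ev j a
  left_inv v := by cases v <;> rfl
  right_inv x := by rcases x with _ | _ | _ | _ | _ | _ <;> rfl

instance : Fintype (SatVert n m) := .ofEquiv _ (equivSum n m).symm

def gadget : SatVert n m → Fin n ⊕ Fin m ⊕ (Fin m × Fin 3)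
  | .var i _ | .cv i _ => .inl i
  | .lit j _ | .bv j _ => .inr (.inl j)
  | .dv j a | .ev j a => .inr (.inr (j, a))

lemma card_filter_gadget_inl (i : Fin n) :
    #{v : SatVert n m | v.gadget = .inl i} = 2 + (n + 2 * m - 5) := by
  have : ({v : SatVert n m | v.gadget = .inl i} : Finset _) =
      univ.image (Sum.elim (var i) (cv i)) := by
    ext v; cases v <;> simp [gadget, eq_comm]
  rw [this, card_image_of_injective _ ?_]
  · simp
  · rintro (_ | _) (_ | _) h <;> simp_all

lemma card_filter_gadget_inr_inl (j : Fin m) :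
    #{v : SatVert n m | v.gadget = .inr (.inl j)} = 3 + (n + 2 * m - 3) := by
  have : ({v : SatVert n m | v.gadget = .inr (.inl j)} : Finset _) =
      univ.image (Sum.elim (lit j) (bv j)) := by
    ext v; cases v <;> simp [gadget, eq_comm]
  rw [this, card_image_of_injective _ ?_]
  · simp
  · rintro (_ | _) (_ | _) h <;> simp_all

lemma card_filter_gadget_inr_inr (ja : Fin m × Fin 3) :
    #{v : SatVert n m | v.gadget = .inr (.inr ja)} = 2 := by
  have : ({v : SatVert n m | v.gadget = .inr (.inr ja)} : Finset _) =
      {dv ja.1 ja.2, ev ja.1 ja.2} := by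
    ext v; cases v <;> simp [gadget, Prod.ext_iff, eq_comm, and_comm]
  rw [this, card_pair (by simp)]

end SatVert

open SatVert

section Graph

variable {n m : ℕ} (lit : Fin m → Fin 3 → Fin n × Bool)

abbrev satGraph : SimpleGraph (SatVert n m) := SimpleGraph.fromRel (satRel n m lit)

variable {lit}

lemma satGraph_adj_of_satRel {v w : SatVert n m} (h : satRel n m lit v w) :
    (satGraph lit).Adj v w := by
  refine (fromRel_adj _ _ _).2 ⟨?_, .inl h⟩
  rintro rfl
  cases v <;> simp [satRel] at h

lemma satGraph_adj_cv_var (i : Fin n) (t) (s : Bool) : (satGraph lit).Adj (.cv i t) (.var i s) :=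
  satGraph_adj_of_satRel rfl

lemma satGraph_adj_bv_lit (j : Fin m) (t) (a : Fin 3) : (satGraph lit).Adj (.bv j t) (.lit j a) :=
  satGraph_adj_of_satRel rfl

lemma satGraph_adj_dv_lit (j : Fin m) (a : Fin 3) : (satGraph lit).Adj (.dv j a) (.lit j a) :=
  satGraph_adj_of_satRel ⟨rfl, rfl⟩

lemma satGraph_adj_ev_lit (j : Fin m) (a : Fin 3) : (satGraph lit).Adj (.ev j a) (.lit j a) :=
  satGraph_adj_of_satRel ⟨rfl, rfl⟩

lemma satGraph_adj_dv_var (j : Fin m) (a : Fin 3) :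
    (satGraph lit).Adj (.dv j a) (.var (lit j a).1 (lit j a).2) :=
  satGraph_adj_of_satRel rfl

lemma satGraph_adj_ev_var (j : Fin m) (a : Fin 3) :
    (satGraph lit).Adj (.ev j a) (.var (lit j a).1 (lit j a).2) :=
  satGraph_adj_of_satRel rfl

def sideColoring : SatVert n m → Fin 2
  | .var _ _ | .lit _ _ => 0
  | _ => 1

lemma satGraph_colorable : (satGraph lit).Colorable 2 := by
  refine ⟨Coloring.mk sideColoring fun {v w} h => ?_⟩
  obtain ⟨-, h | h⟩ := (fromRel_adj _ _ _).1 h <;>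
    cases v <;> cases w <;> simp [satRel, sideColoring] at h ⊢

end Graph

section Occurrences

variable {n m : ℕ} (lit : Fin m → Fin 3 → Fin n × Bool)

def occurrences (i : Fin n) : Finset (Fin m × Fin 3) :=
  univ.filter fun ja => (lit ja.1 ja.2).1 = i

lemma sum_sum_occurrences {M : Type*} [AddCommMonoid M] (f : Fin m × Fin 3 → M) :
    ∑ i, ∑ ja ∈ occurrences lit i, f ja = ∑ ja, f ja :=
  sum_fiberwise univ _ f

variable {lit}
  (hocc : ∀ p : Fin n × Bool, (univ.filter fun ja : Fin m × Fin 3 => lit ja.1 ja.2 = p).card = 2)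
include hocc

lemma three_mul_eq_four_mul : 3 * m = 4 * n := by
  have h := card_eq_sum_card_fiberwise (f := fun ja : Fin m × Fin 3 => lit ja.1 ja.2)
    (s := univ) (t := univ) (fun _ _ => mem_univ _)
  simp only [hocc, sum_const, card_univ, Fintype.card_prod, Fintype.card_fin,
    Fintype.card_bool, smul_eq_mul] at h
  omega

lemma card_occurrences (i : Fin n) : (occurrences lit i).card = 4 := by
  rw [occurrences, card_eq_sum_card_fiberwise (f := fun ja : Fin m × Fin 3 => (lit ja.1 ja.2).2)
    (t := univ) (fun _ _ => mem_univ _)]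
  simp only [filter_filter, Fintype.sum_bool]
  have h := congrArg₂ (· + ·) (hocc (i, true)) (hocc (i, false))
  simpa only [Prod.ext_iff] using h

end Occurrences

section Satisfiable

variable {n m : ℕ} {lit : Fin m → Fin 3 → Fin n × Bool} (σ : Fin n → Bool) (ch : Fin m → Fin 3)

def blockerOf : Finset (SatVert n m) :=
  univ.image (fun i => .var i (σ i)) ∪ univ.biUnion fun j => (univ.erase (ch j)).image (.lit j)

@[simp] lemma var_mem_blockerOf {i : Fin n} {s : Bool} :
    SatVert.var (m := m) i s ∈ blockerOf σ ch ↔ s = σ i := by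
  simp [blockerOf, eq_comm]

@[simp] lemma lit_mem_blockerOf {j : Fin m} {a : Fin 3} :
    SatVert.lit (n := n) j a ∈ blockerOf σ ch ↔ a ≠ ch j := by
  simp [blockerOf]

lemma var_or_lit_of_mem_blockerOf {v : SatVert n m} (h : v ∈ blockerOf σ ch) :
    (∃ i s, v = .var i s) ∨ ∃ j a, v = .lit j a := by
  simp only [blockerOf, mem_union, mem_image, mem_biUnion] at h
  obtain ⟨i, -, rfl⟩ | ⟨j, -, a, -, rfl⟩ := h
  exacts [.inl ⟨i, _, rfl⟩, .inr ⟨j, a, rfl⟩]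

lemma card_blockerOf_le : (blockerOf σ ch : Finset (SatVert n m)).card ≤ n + 2 * m := by
  calc (blockerOf σ ch).card
      ≤ (univ.image fun i => SatVert.var (m := m) i (σ i)).card +
          ∑ j, ((univ.erase (ch j)).image (SatVert.lit (n := n) j)).card :=
        (card_union_le _ _).trans (Nat.add_le_add_left card_biUnion_le _)
    _ ≤ n + ∑ _j : Fin m, 2 := by
        gcongr
        · exact card_image_le.trans (by simp)
        · exact card_image_le.trans (by simp)
    _ = n + 2 * m := by simp [mul_comm]

variable (lit) in
/-- Constant on the components of `G − blockerOf σ ch` when clause `j` is satisfied by its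
literal `ch j`: a pendant is labelled by its clause if its literal vertex survives, by its
variable if its variable-gadget vertex survives, and otherwise by its own position. -/
def componentLabel : SatVert n m → Fin n ⊕ Fin m ⊕ (Fin m × Fin 3)
  | .dv j a | .ev j a =>
      if a = ch j then .inr (.inl j)
      else if σ (lit j a).1 = (lit j a).2 then .inr (.inr (j, a))
      else .inl (lit j a).1
  | v => v.gadget

variable {σ ch}

lemma componentLabel_eq_of_satRel (hch : ∀ j, σ (lit j (ch j)).1 = (lit j (ch j)).2)
    {v w : SatVert n m} (h : satRel n m lit v w)
    (hv : v ∉ blockerOf σ ch) (hw : w ∉ blockerOf σ ch) :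
    componentLabel lit σ ch v = componentLabel lit σ ch w := by
  cases v <;> cases w <;> simp only [satRel] at h
  case cv.var | bv.lit => subst h; rfl
  case dv.lit j a _ _ | ev.lit j a _ _ =>
    obtain ⟨rfl, rfl⟩ := h
    have ha : a = ch j := by simpa using hw
    simp [componentLabel, gadget, ha]
  case dv.var j a i s | ev.var j a i s =>
    have hs : s ≠ σ i := by simpa using hw
    have ha : a ≠ ch j := by
      rintro rfl
      exact hs (by simpa [h] using (hch j).symm)
    simp [componentLabel, gadget, ha, h, Ne.symm hs]

variable (hocc : ∀ p : Fin n × Bool,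
  (univ.filter fun ja : Fin m × Fin 3 => lit ja.1 ja.2 = p).card = 2)
include hocc

lemma ncard_componentLabel_fiber_le (r : Fin n ⊕ Fin m ⊕ (Fin m × Fin 3)) :
    {v | v ∉ blockerOf σ ch ∧ componentLabel lit σ ch v = r}.ncard ≤ n + 2 * m := by
  have h3 := three_mul_eq_four_mul hocc
  suffices ∃ F : Finset (SatVert n m),
      {v | v ∉ blockerOf σ ch ∧ componentLabel lit σ ch v = r} ⊆ F ∧ F.card ≤ n + 2 * m by
    obtain ⟨F, hF, hcard⟩ := this
    exact (Set.ncard_le_ncard hF F.finite_toSet).trans ((Set.ncard_coe_finset F).trans_le hcard)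
  rcases r with i | j | ⟨j, a⟩
  · set occ := univ.filter fun ja : Fin m × Fin 3 => lit ja.1 ja.2 = (i, !σ i)
    refine ⟨insert (.var i (!σ i)) (univ.image (.cv i) ∪
      occ.biUnion fun ja => {.dv ja.1 ja.2, .ev ja.1 ja.2}), ?_, ?_⟩
    · rintro v ⟨hv, hr⟩
      cases v <;> simp [occ, componentLabel, gadget, Prod.ext_iff, Bool.eq_not] at hv hr ⊢
      all_goals
        try split_ifs at hr
        grind
    · have hpend : (occ.biUnion fun ja =>
          ({.dv ja.1 ja.2, .ev ja.1 ja.2} : Finset (SatVert n m))).card ≤ 4 :=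
        (card_biUnion_le_card_mul _ _ 2 fun _ _ => card_le_two).trans (by rw [hocc])
      have hcv : (univ.image (SatVert.cv (m := m) i)).card ≤ n + 2 * m - 5 :=
        card_image_le.trans (by simp)
      grw [card_insert_le, card_union_le, hpend, hcv]
      have := i.pos
      omega
  · refine ⟨{.lit j (ch j), .dv j (ch j), .ev j (ch j)} ∪ univ.image (.bv j), ?_, ?_⟩
    · rintro v ⟨hv, hr⟩
      cases v <;> simp [componentLabel, gadget] at hv hr ⊢
      all_goals (try split_ifs at hr) <;> grind
    · have hbv : (univ.image (SatVert.bv (n := n) j)).card ≤ n + 2 * m - 3 :=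
        card_image_le.trans (by simp)
      grw [card_union_le, card_le_three, hbv]
      have := j.pos
      omega
  · refine ⟨{.dv j a, .ev j a}, ?_, ?_⟩
    · rintro v ⟨hv, hr⟩
      cases v <;> simp [componentLabel, gadget] at hv hr ⊢
      all_goals (try split_ifs at hr) <;> grind
    · grw [card_le_two]
      have := j.pos
      omega

lemma smallComponents_blockerOf (hch : ∀ j, σ (lit j (ch j)).1 = (lit j (ch j)).2) :
    SmallComponents (satGraph lit) (blockerOf σ ch : Set (SatVert n m)) (n + 2 * m) := by
  refine smallComponents_of_invariant (componentLabel lit σ ch) (fun v w hv hw hvw => ?_)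
    (ncard_componentLabel_fiber_le hocc)
  obtain ⟨-, h | h⟩ := (fromRel_adj _ _ _).1 hvw
  exacts [componentLabel_eq_of_satRel hch h hv hw, (componentLabel_eq_of_satRel hch h hw hv).symm]

omit σ ch in
lemma exists_blocker_of_satisfiable
    (hsat : ∃ σ : Fin n → Bool, ∀ j : Fin m, ∃ a : Fin 3, σ (lit j a).1 = (lit j a).2) :
    ∃ B : Finset (SatVert n m), B.card ≤ n + 2 * m ∧
      SmallComponents (satGraph lit) (B : Set (SatVert n m)) (n + 2 * m) ∧
      ∀ v ∈ B, (∃ i s, v = SatVert.var i s) ∨ (∃ j a, v = SatVert.lit j a) := by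
  obtain ⟨σ, hσ⟩ := hsat
  choose ch hch using hσ
  exact ⟨blockerOf σ ch, card_blockerOf_le σ ch, smallComponents_blockerOf hocc hch,
    fun v hv => var_or_lit_of_mem_blockerOf σ ch hv⟩

end Satisfiable

section Unsatisfiable

variable {n m : ℕ} {lit : Fin m → Fin 3 → Fin n × Bool} {B : Finset (SatVert n m)}

lemma card_eq_sum_card_filter_gadget (B : Finset (SatVert n m)) :
    #B = ∑ i, #{v ∈ B | v.gadget = .inl i} + ∑ j, #{v ∈ B | v.gadget = .inr (.inl j)} +
      ∑ ja, #{v ∈ B | v.gadget = .inr (.inr ja)} := by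
  rw [card_eq_sum_card_fiberwise (f := gadget) (t := univ) (fun _ _ => mem_univ _),
    Fintype.sum_sum_type, Fintype.sum_sum_type, add_assoc]

lemma not_var_mem_and_var_mem {i : Fin n} (hr : #{v ∈ B | v.gadget = .inl i} = 1) :
    ¬(.var i true ∈ B ∧ .var i false ∈ B) := by
  rintro ⟨ht, hf⟩
  have hsub : {.var i true, .var i false} ⊆ {v ∈ B | v.gadget = .inl i} :=
    insert_subset_iff.2 ⟨mem_filter.2 ⟨ht, rfl⟩, singleton_subset_iff.2 (mem_filter.2 ⟨hf, rfl⟩)⟩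
  have := card_le_card hsub
  rw [card_pair (by simp)] at this
  omega

lemma exists_bv_notMem {j : Fin m} (hk : 6 ≤ n + 2 * m)
    (hw : #{v ∈ B | v.gadget = .inr (.inl j)} < 3) : ∃ t, .bv j t ∉ B := by
  by_contra! h
  have hsub : univ.image (SatVert.bv (n := n) j) ⊆ {v ∈ B | v.gadget = .inr (.inl j)} := by
    intro v hv
    obtain ⟨t, -, rfl⟩ := mem_image.1 hv
    exact mem_filter.2 ⟨h t, rfl⟩
  have := card_le_card hsub
  rw [card_image_of_injective _ fun _ _ h => (SatVert.bv.inj h).2] at this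
  simp only [card_univ, Fintype.card_fin] at this
  omega

lemma three_le_card_filter_lit_notMem_add (j : Fin m) :
    3 ≤ #{a | .lit j a ∉ B} + #{v ∈ B | v.gadget = .inr (.inl j)} := by
  have hsub : (univ.filter fun a => .lit j a ∈ B).image (SatVert.lit (n := n) j) ⊆
      {v ∈ B | v.gadget = .inr (.inl j)} := by
    intro v hv
    obtain ⟨a, ha, rfl⟩ := mem_image.1 hv
    exact mem_filter.2 ⟨(mem_filter.1 ha).2, rfl⟩
  have := card_le_card hsub
  rw [card_image_of_injective _ fun _ _ h => (SatVert.lit.inj h).2] at this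
  have := card_filter_add_card_filter_not (s := univ) (fun a : Fin 3 => .lit j a ∈ B)
  simp only [card_univ, Fintype.card_fin] at this
  omega

lemma mem_componentAvoiding_of_clause {j : Fin m} {t : Fin (n + 2 * m - 3)} {a₀ : Fin 3}
    (ht : .bv j t ∉ B) (ha₀ : .lit j a₀ ∉ B) {v : SatVert n m} (hv : v ∉ B)
    (hgv : v.gadget = .inr (.inl j) ∨ ∃ a, .lit j a ∉ B ∧ v.gadget = .inr (.inr (j, a))) :
    v ∈ (satGraph lit).componentAvoiding B (.bv j t) := by
  have hlit : ∀ a, .lit j a ∉ B → .lit j a ∈ (satGraph lit).componentAvoiding B (.bv j t) :=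
    fun a ha => (satGraph_adj_bv_lit j t a).mem_componentAvoiding
      (self_mem_componentAvoiding ht) ha
  cases v with
  | lit j' a =>
    obtain rfl : j = j' := by simpa [gadget, eq_comm] using hgv
    exact hlit a hv
  | bv j' t' =>
    obtain rfl : j = j' := by simpa [gadget, eq_comm] using hgv
    exact (satGraph_adj_bv_lit j t' a₀).symm.mem_componentAvoiding (hlit a₀ ha₀) hv
  | dv j' a =>
    obtain ⟨rfl, ha⟩ : j = j' ∧ .lit j a ∉ B := by
      simpa [gadget, eq_comm, and_comm] using hgv
    exact (satGraph_adj_dv_lit j a).symm.mem_componentAvoiding (hlit a ha) hv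
  | ev j' a =>
    obtain ⟨rfl, ha⟩ : j = j' ∧ .lit j a ∉ B := by
      simpa [gadget, eq_comm, and_comm] using hgv
    exact (satGraph_adj_ev_lit j a).symm.mem_componentAvoiding (hlit a ha) hv
  | var | cv => simp [gadget] at hgv

lemma mem_componentAvoiding_of_var {i : Fin n} (hk : 5 < n + 2 * m)
    (hR : ∀ v : SatVert n m, v.gadget = .inl i → v ∉ B) {v : SatVert n m} (hv : v ∉ B)
    (hgv : v.gadget = .inl i ∨
      ∃ ja : Fin m × Fin 3, (lit ja.1 ja.2).1 = i ∧ v.gadget = .inr (.inr ja)) :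
    v ∈ (satGraph lit).componentAvoiding B (.var i true) := by
  have hu := self_mem_componentAvoiding (G := satGraph lit) (hR (.var i true) rfl)
  have hc₀ := (satGraph_adj_cv_var i ⟨0, by omega⟩ true).symm.mem_componentAvoiding hu
    (hR _ rfl)
  have hvar : ∀ s, .var i s ∈ (satGraph lit).componentAvoiding B (.var i true) :=
    fun s => (satGraph_adj_cv_var i _ s).mem_componentAvoiding hc₀ (hR _ rfl)
  cases v with
  | var i' s =>
    obtain rfl : i = i' := by simpa [gadget, eq_comm] using hgv
    exact hvar s
  | cv i' t =>
    obtain rfl : i = i' := by simpa [gadget, eq_comm] using hgv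
    exact (satGraph_adj_cv_var i t true).symm.mem_componentAvoiding hu hv
  | dv j a =>
    obtain rfl : (lit j a).1 = i := by simpa [gadget] using hgv
    exact (satGraph_adj_dv_var j a).symm.mem_componentAvoiding (hvar _) hv
  | ev j a =>
    obtain rfl : (lit j a).1 = i := by simpa [gadget] using hgv
    exact (satGraph_adj_ev_var j a).symm.mem_componentAvoiding (hvar _) hv
  | lit | bv => simp [gadget] at hgv

variable (hsc : SmallComponents (satGraph lit) (B : Set (SatVert n m)) (n + 2 * m))
include hsc

lemma clause_gadget_bound (hk : 6 ≤ n + 2 * m) (j : Fin m) :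
    6 ≤ 3 * #{v ∈ B | v.gadget = .inr (.inl j)} +
      ∑ a, #{v ∈ B | v.gadget = .inr (.inr (j, a))} := by
  by_cases hw : 2 ≤ #{v ∈ B | v.gadget = .inr (.inl j)}
  · omega
  obtain ⟨t, ht⟩ := exists_bv_notMem (B := B) (j := j) hk (by omega)
  have hL := three_le_card_filter_lit_notMem_add (B := B) j
  set L := univ.filter fun a : Fin 3 => .lit j a ∉ B
  obtain ⟨a₀, ha₀⟩ : L.Nonempty := card_pos.1 (by omega)
  have hS := hsc.sum_card_filter_compl_le gadget
    (insert (.inr (.inl j)) (L.image fun a => .inr (.inr (j, a)))) (u := .bv j t)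
    fun v hv hgv => mem_componentAvoiding_of_clause ht (mem_filter.1 ha₀).2 hv
      (by simpa [L, eq_comm] using hgv)
  rw [sum_insert (by simp), sum_image (by simp)] at hS
  have hW := card_filter_add_card_compl_filter B (·.gadget = .inr (.inl j))
  rw [card_filter_gadget_inr_inl] at hW
  have hP : ∑ a ∈ L, (#{v ∈ B | v.gadget = .inr (.inr (j, a))} +
      #{v ∈ Bᶜ | v.gadget = .inr (.inr (j, a))}) = 2 * #L := by
    simp [card_filter_add_card_compl_filter, card_filter_gadget_inr_inr, mul_comm]
  rw [sum_add_distrib] at hP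
  have := sum_le_sum_of_subset (f := fun a => #{v ∈ B | v.gadget = .inr (.inr (j, a))})
    (subset_univ L)
  omega

lemma var_gadget_bound
    (hocc : ∀ p : Fin n × Bool,
      (univ.filter fun ja : Fin m × Fin 3 => lit ja.1 ja.2 = p).card = 2)
    (hk : 6 ≤ n + 2 * m) (i : Fin n) :
    3 ≤ 3 * #{v ∈ B | v.gadget = .inl i} +
      2 * ∑ ja ∈ occurrences lit i, #{v ∈ B | v.gadget = .inr (.inr ja)} := by
  by_cases hr : 1 ≤ #{v ∈ B | v.gadget = .inl i}
  · omega
  have hR : ∀ v : SatVert n m, v.gadget = .inl i → v ∉ B :=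
    fun v hgv hv => hr (card_pos.2 ⟨v, mem_filter.2 ⟨hv, hgv⟩⟩)
  have hS := hsc.sum_card_filter_compl_le gadget
    (insert (.inl i) ((occurrences lit i).image fun ja => .inr (.inr ja))) (u := .var i true)
    fun v hv hgv => mem_componentAvoiding_of_var (by omega) hR hv
      (by simpa [occurrences, eq_comm] using hgv)
  rw [sum_insert (by simp), sum_image (by simp)] at hS
  have hRc := card_filter_add_card_compl_filter B (·.gadget = .inl i)
  rw [card_filter_gadget_inl] at hRc
  have hP : ∑ ja ∈ occurrences lit i, (#{v ∈ B | v.gadget = .inr (.inr ja)} +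
      #{v ∈ Bᶜ | v.gadget = .inr (.inr ja)}) = 8 := by
    simp [card_filter_add_card_compl_filter, card_filter_gadget_inr_inr, card_occurrences hocc]
  rw [sum_add_distrib] at hP
  omega

lemma blocker_gadget_counts
    (hocc : ∀ p : Fin n × Bool,
      (univ.filter fun ja : Fin m × Fin 3 => lit ja.1 ja.2 = p).card = 2)
    (hk : 6 ≤ n + 2 * m) (hcard : #B ≤ n + 2 * m) :
    (∀ i, #{v ∈ B | v.gadget = .inl i} = 1) ∧ (∀ j, #{v ∈ B | v.gadget = .inr (.inl j)} = 2) ∧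
      ∀ ja, #{v ∈ B | v.gadget = .inr (.inr ja)} = 0 := by
  have hB := card_eq_sum_card_filter_gadget B
  have hV := sum_le_sum fun i (_ : i ∈ univ) => var_gadget_bound hsc hocc hk i
  have hC := sum_le_sum fun j (_ : j ∈ univ) => clause_gadget_bound hsc hk j
  have hVeq := (sum_eq_sum_iff_of_le fun i (_ : i ∈ univ) => var_gadget_bound hsc hocc hk i).1
  rw [sum_add_distrib, ← mul_sum, ← mul_sum, sum_sum_occurrences] at hV hVeq
  rw [sum_add_distrib, ← mul_sum,
    ← Fintype.sum_prod_type (f := fun ja => #{v ∈ B | v.gadget = .inr (.inr ja)})] at hC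
  simp only [sum_const, card_univ, Fintype.card_fin, smul_eq_mul] at hV hC hVeq
  -- every variable term is tight, and `3 r + 2 p = 3` forces `r = 1`, `p = 0`
  have hr := fun i => hVeq (by omega) i (mem_univ _)
  have hEsum : ∑ ja, #{v ∈ B | v.gadget = .inr (.inr ja)} = 0 := by
    rw [← sum_sum_occurrences lit]
    exact sum_eq_zero fun i _ => by have := hr i; omega
  have hE := fun ja => sum_eq_zero_iff.1 hEsum ja (mem_univ _)
  have hw : ∀ j, 2 ≤ #{v ∈ B | v.gadget = .inr (.inl j)} := fun j => by
    have := clause_gadget_bound hsc hk j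
    simp only [hE, sum_const_zero] at this
    omega
  refine ⟨fun i => by have := hr i; omega, fun j => ?_, hE⟩
  refine ((sum_eq_sum_iff_of_le fun j _ => hw j).1 ?_ j (mem_univ _)).symm
  simp only [sum_const, card_univ, Fintype.card_fin, smul_eq_mul]
  omega

lemma exists_lit_notMem_var_mem (hk : 6 ≤ n + 2 * m) {j : Fin m}
    (hw : #{v ∈ B | v.gadget = .inr (.inl j)} = 2)
    (hd : ∀ a, #{v ∈ B | v.gadget = .inr (.inr (j, a))} = 0) :
    ∃ a, .lit j a ∉ B ∧ .var (lit j a).1 (lit j a).2 ∈ B := by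
  obtain ⟨t, ht⟩ := exists_bv_notMem (B := B) (j := j) hk (by omega)
  have hL := three_le_card_filter_lit_notMem_add (B := B) j
  obtain ⟨a, ha⟩ : (univ.filter fun a : Fin 3 => .lit j a ∉ B).Nonempty := card_pos.1 (by omega)
  replace ha := (mem_filter.1 ha).2
  refine ⟨a, ha, ?_⟩
  by_contra hx
  have hpend : ∀ v : SatVert n m, v.gadget = .inr (.inr (j, a)) → v ∉ B :=
    fun v hgv hv => (hd a).not_gt (card_pos.2 ⟨v, mem_filter.2 ⟨hv, hgv⟩⟩)
  have hdv := mem_componentAvoiding_of_clause (lit := lit) ht ha (hpend (.dv j a) rfl)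
    (.inr ⟨a, ha, rfl⟩)
  have hev := mem_componentAvoiding_of_clause (lit := lit) ht ha (hpend (.ev j a) rfl)
    (.inr ⟨a, ha, rfl⟩)
  have hS := hsc.card_le (u := .bv j t)
    (S := {v ∈ Bᶜ | v.gadget = .inr (.inl j)} ∪ {.dv j a, .ev j a, .var (lit j a).1 (lit j a).2})
    (by
      intro v hv
      simp only [mem_union, mem_filter, mem_compl, mem_insert, mem_singleton] at hv
      rcases hv with ⟨hv, hgv⟩ | rfl | rfl | rfl
      exacts [mem_componentAvoiding_of_clause ht ha hv (.inl hgv), hdv, hev,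
        (satGraph_adj_dv_var j a).mem_componentAvoiding hdv hx])
  rw [card_union_of_disjoint, card_insert_of_notMem (by simp), card_pair (by simp)] at hS
  · have hW := card_filter_add_card_compl_filter B (·.gadget = .inr (.inl j))
    rw [card_filter_gadget_inr_inl] at hW
    omega
  · simp only [Finset.disjoint_right, mem_insert, mem_singleton, mem_filter]
    rintro _ (rfl | rfl | rfl) <;> simp [gadget]

lemma satisfiable_of_blocker
    (hocc : ∀ p : Fin n × Bool,
      (univ.filter fun ja : Fin m × Fin 3 => lit ja.1 ja.2 = p).card = 2)
    (hcard : #B ≤ n + 2 * m) :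
    ∃ σ : Fin n → Bool, ∀ j : Fin m, ∃ a : Fin 3, σ (lit j a).1 = (lit j a).2 := by
  rcases Nat.eq_zero_or_pos m with rfl | hm
  · exact ⟨fun _ => true, fun j => j.elim0⟩
  have hk : 6 ≤ n + 2 * m := by have := three_mul_eq_four_mul hocc; omega
  obtain ⟨hr, hw, he⟩ := blocker_gadget_counts hsc hocc hk hcard
  refine ⟨fun i => decide (.var i true ∈ B), fun j => ?_⟩
  obtain ⟨a, -, hx⟩ := exists_lit_notMem_var_mem hsc hk (hw j) fun a => he (j, a)
  refine ⟨a, ?_⟩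
  have := not_var_mem_and_var_mem (hr (lit j a).1)
  cases hs : (lit j a).2 <;> simp_all

end Unsatisfiable

/-- for a 3-CNF formula in which every literal occurs in exactly two
clauses, with `k = n + 2m`, the formula is satisfiable iff the reduction graph has a set `B`
of at most `k` vertices whose deletion leaves components of at most `k` vertices; moreover
the graph is bipartite, and whenever such a `B` exists, one exists using only vertices
`x_i`, `¬x_i` and `l_j^a`. -/
theorem stmt8 (n m : ℕ) (lit : Fin m → Fin 3 → Fin n × Bool)
    (hocc : ∀ p : Fin n × Bool,
      (Finset.univ.filter fun ja : Fin m × Fin 3 => lit ja.1 ja.2 = p).card = 2) :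
    ((∃ σ : Fin n → Bool, ∀ j : Fin m, ∃ a : Fin 3, σ (lit j a).1 = (lit j a).2) ↔
      ∃ B : Finset (SatVert n m), B.card ≤ n + 2 * m ∧
        SmallComponents (SimpleGraph.fromRel (satRel n m lit)) (B : Set (SatVert n m))
          (n + 2 * m)) ∧
    (SimpleGraph.fromRel (satRel n m lit)).Colorable 2 ∧
    ((∃ B : Finset (SatVert n m), B.card ≤ n + 2 * m ∧
        SmallComponents (SimpleGraph.fromRel (satRel n m lit)) (B : Set (SatVert n m))
          (n + 2 * m)) →
      ∃ B : Finset (SatVert n m), B.card ≤ n + 2 * m ∧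
        SmallComponents (SimpleGraph.fromRel (satRel n m lit)) (B : Set (SatVert n m))
          (n + 2 * m) ∧
        ∀ v ∈ B, (∃ i s, v = SatVert.var i s) ∨ (∃ j a, v = SatVert.lit j a)) := by
  have hsat : (∃ B : Finset (SatVert n m), B.card ≤ n + 2 * m ∧
      SmallComponents (satGraph lit) (B : Set (SatVert n m)) (n + 2 * m)) →
      ∃ σ : Fin n → Bool, ∀ j : Fin m, ∃ a : Fin 3, σ (lit j a).1 = (lit j a).2 :=
    fun ⟨B, hcard, hsc⟩ => satisfiable_of_blocker hsc hocc hcard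
  have hblock := exists_blocker_of_satisfiable hocc (lit := lit)
  refine ⟨⟨fun h => ?_, hsat⟩, satGraph_colorable, fun h => hblock (hsat h)⟩
  obtain ⟨B, hcard, hsc, -⟩ := hblock h
  exact ⟨B, hcard, hsc⟩
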